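/- arXiv:1705.00054 — 3 statements merged into one kernel-verified Lean document; each statement's English description precedes it below -/
import Mathlib

section
/- Measurable selection: Let Σ be an m-dimensional C¹ submanifold of ℝ^d, let B ⊂ Σ be an ℋ^m-measurable set, and let u : B → 𝒜_Q(ℝⁿ) be a measurable function (with respect to the Borel σ-algebra of the metric space (𝒜_Q(ℝⁿ), 𝒢)). Then there exist measurable functions u_1, ..., u_Q : B → ℝⁿ such that u(p) = ∑_{l=1}^Q ⟦u_l(p)⟧ for ℋ^m-almost every p ∈ B. -/
open scoped BigOperators
open Metric MeasureTheory Asymptotics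
open scoped Classical

noncomputable section

/-- `Euc n` is the Euclidean space `ℝⁿ`. -/
abbrev Euc (n : ℕ) : Type := EuclideanSpace ℝ (Fin n)

/-- Two `Q`-tuples of points are identified when they differ by a permutation of the indices. -/
def QPerm (α : Type*) (Q : ℕ) : Setoid (Fin Q → α) where
  r f g := ∃ σ : Equiv.Perm (Fin Q), f = g ∘ σ
  iseqv := by
    refine ⟨fun f => ⟨Equiv.refl _, rfl⟩, ?_, ?_⟩
    · rintro f g ⟨σ, rfl⟩
      exact ⟨σ.symm, by ext i; simp⟩
    · rintro f g h ⟨σ, rfl⟩ ⟨ρ, rfl⟩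
      exact ⟨σ.trans ρ, by ext i; simp⟩

/-- The space `𝒜_Q(α)` of `Q`-points of `α`: unordered `Q`-tuples of points of `α`. -/
abbrev AQ (α : Type*) (Q : ℕ) : Type _ := Quotient (QPerm α Q)

/-- The `Q`-point `∑_l ⟦f l⟧`. -/
def AQmk {α : Type*} {Q : ℕ} (f : Fin Q → α) : AQ α Q := Quotient.mk (QPerm α Q) f

/-- `𝒢` computed on representatives: `min_{σ ∈ 𝒫_Q} (∑_l ‖v_l - w_{σ(l)}‖²)^{1/2}`. -/
def Gfun {α : Type*} [NormedAddCommGroup α] {Q : ℕ} (f g : Fin Q → α) : ℝ :=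
  ⨅ σ : Equiv.Perm (Fin Q), Real.sqrt (∑ l, ‖f l - g (σ l)‖ ^ 2)

/-- The metric `𝒢` on `𝒜_Q(α)`; it is computed on (arbitrary) representatives, which is
well posed since `Gfun` is invariant under permutations of either argument. -/
def Gdist {α : Type*} [NormedAddCommGroup α] {Q : ℕ} (T₁ T₂ : AQ α Q) : ℝ :=
  Gfun T₁.out T₂.out

/-- The multiplicity `Θ_T(v)` of the value `v` in the `Q`-point `T`. -/
def Theta {α : Type*} {Q : ℕ} (T : AQ α Q) (v : α) : ℕ :=
  {l : Fin Q | T.out l = v}.ncard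

/-- The support `spt(T) = {v_1, …, v_Q}` of a `Q`-point. -/
def AQspt {α : Type*} {Q : ℕ} (T : AQ α Q) : Set α := Set.range T.out

/-- The center of mass `η(T) := Q⁻¹ ∑_l v_l` of a `Q`-point. -/
def AQeta {α : Type*} [AddCommGroup α] [Module ℝ α] {Q : ℕ} (T : AQ α Q) : α :=
  (Q : ℝ)⁻¹ • ∑ l, T.out l

/-- `S ⊆ ℝ^d` is an `m`-dimensional submanifold of class `C¹`: near each of its points it is
the image of a `C¹` immersion defined on an open subset of `ℝ^m` which is a homeomorphism
onto its (relatively open) image. -/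
def IsC1Submanifold (m : ℕ) {d : ℕ} (S : Set (Euc d)) : Prop :=
  ∀ p ∈ S, ∃ (Ω : Set (Euc m)) (ψ : Euc m → Euc d) (V : Set (Euc d)) (g : Euc d → Euc m),
    IsOpen Ω ∧ IsOpen V ∧ p ∈ V ∧
    ContDiffOn ℝ 1 ψ Ω ∧
    (∀ x ∈ Ω, Function.Injective (fderiv ℝ ψ x)) ∧
    ψ '' Ω = S ∩ V ∧
    ContinuousOn g (S ∩ V) ∧ (∀ x ∈ Ω, g (ψ x) = x)

/-- The topology on `𝒜_Q(α)` induced by the metric `𝒢` (generated by the `𝒢`-balls). -/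
def AQTop (α : Type*) [NormedAddCommGroup α] (Q : ℕ) : TopologicalSpace (AQ α Q) :=
  TopologicalSpace.generateFrom {s | ∃ (T : AQ α Q) (r : ℝ), s = {T' | Gdist T T' < r}}

/-- The Borel σ-algebra of the metric space `(𝒜_Q(α), 𝒢)`. -/
def AQBorel (α : Type*) [NormedAddCommGroup α] (Q : ℕ) : MeasurableSpace (AQ α Q) :=
  @borel (AQ α Q) (AQTop α Q)

/-! Sorting a `Q`-point lexicographically picks its unique monotone representative; the `u_l` are
the entries of the sorted representative of `u`, so `u = ∑_l ⟦u_l⟧` holds everywhere. For `C`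
closed, the points whose sorted representative lies in `C` form the image under the quotient map
of `C ∩ {monotone tuples}`. This set is `F_σ`, since the strict lexicographic order is `G_δ`. The
quotient map sends closed sets to `𝒢`-closed sets: `𝒢(T, T')` bounds the distance from any
representative of `T` to any set of tuples containing all representatives of `T'`. Hence sorting
is Borel. -/

open Topology

section QuotientMetric

variable {α : Type*} {Q : ℕ}

theorem AQmk_out (T : AQ α Q) : AQmk T.out = T :=
  Quotient.out_eq T

theorem AQmk_comp_perm (f : Fin Q → α) (σ : Equiv.Perm (Fin Q)) : AQmk (f ∘ σ) = AQmk f :=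
  Quotient.sound ⟨σ, rfl⟩

variable [NormedAddCommGroup α]

theorem Gdist_self (T : AQ α Q) : Gdist T T = 0 := by
  refine le_antisymm ?_ (le_ciInf fun _ => Real.sqrt_nonneg _)
  refine (ciInf_le (Set.finite_range _).bddBelow 1).trans_eq ?_
  simp

theorem dist_le_sqrt_sum_norm_sub_sq {ι : Type*} [Fintype ι] (f g : ι → α) :
    dist f g ≤ √(∑ l, ‖f l - g l‖ ^ 2) := by
  refine (dist_pi_le_iff (Real.sqrt_nonneg _)).mpr fun l => ?_
  rw [dist_eq_norm]
  exact Real.le_sqrt_of_sq_le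
    (Finset.single_le_sum (fun j _ => sq_nonneg ‖f j - g j‖) (Finset.mem_univ l))

theorem infDist_out_le_Gdist {A : Set (AQ α Q)} {T' : AQ α Q} (hT' : T' ∈ A) (T : AQ α Q) :
    infDist T.out (AQmk ⁻¹' A) ≤ Gdist T T' := by
  refine le_ciInf fun σ => (infDist_le_dist_of_mem ?_).trans (dist_le_sqrt_sum_norm_sub_sq _ _)
  change AQmk (T'.out ∘ σ) ∈ A
  rwa [AQmk_comp_perm, AQmk_out]

theorem isClosed_of_isClosed_AQmk_preimage {A : Set (AQ α Q)} (hA : IsClosed (AQmk ⁻¹' A)) :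
    IsClosed[AQTop α Q] A := by
  let _ := AQTop α Q
  rcases A.eq_empty_or_nonempty with rfl | ⟨T₀, hT₀⟩
  · exact isClosed_empty
  have hne : (AQmk ⁻¹' A).Nonempty := ⟨T₀.out, by rwa [Set.mem_preimage, AQmk_out]⟩
  rw [← isOpen_compl_iff, isOpen_iff_forall_mem_open]
  intro T hT
  refine ⟨{T' | Gdist T T' < infDist T.out (AQmk ⁻¹' A)}, fun T' hT' hT'A => ?_,
    .basic _ ⟨T, _, rfl⟩, ?_⟩
  · exact (infDist_out_le_Gdist hT'A T).not_gt hT'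
  · rw [Set.mem_ofPred_eq, Gdist_self, ← hA.notMem_iff_infDist_pos hne, Set.mem_preimage, AQmk_out]
    exact hT

theorem isClosed_AQmk_image {D : Set (Fin Q → α)} (hD : IsClosed D) :
    IsClosed[AQTop α Q] (AQmk '' D) := by
  refine isClosed_of_isClosed_AQmk_preimage ?_
  have : AQmk ⁻¹' (AQmk '' D) = ⋃ σ : Equiv.Perm (Fin Q), (· ∘ σ) ⁻¹' D := by
    ext f
    simp only [Set.mem_preimage, Set.mem_image, Set.mem_iUnion]
    constructor
    · rintro ⟨g, hg, hgf⟩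
      obtain ⟨σ, rfl⟩ := Quotient.exact hgf
      exact ⟨σ, hg⟩
    · rintro ⟨σ, hσ⟩
      exact ⟨f ∘ σ, hσ, AQmk_comp_perm f σ⟩
  rw [this]
  exact isClosed_iUnion_of_finite fun σ => hD.preimage (by fun_prop)

theorem measurableSet_AQmk_image_of_isGδ_compl {D : Set (Fin Q → α)} (hD : IsGδ Dᶜ) :
    MeasurableSet[AQBorel α Q] (AQmk '' D) := by
  obtain ⟨U, hU, hDU⟩ := isGδ_iff_eq_iInter_nat.mp hD
  rw [← compl_compl D, hDU, Set.compl_iInter, Set.image_iUnion]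
  exact MeasurableSet.iUnion fun k => .of_compl <| MeasurableSpace.measurableSet_generateFrom
    (isClosed_AQmk_image (hU k).isClosed_compl).isOpen_compl

end QuotientMetric

section Sorting

variable {α : Type*} [LinearOrder α] {Q : ℕ}

def AQsort (T : AQ α Q) : Fin Q → α :=
  T.out ∘ Tuple.sort T.out

theorem AQmk_AQsort (T : AQ α Q) : AQmk (AQsort T) = T :=
  (AQmk_comp_perm _ _).trans (AQmk_out T)

theorem monotone_AQsort (T : AQ α Q) : Monotone (AQsort T) :=
  Tuple.monotone_sort T.out

theorem AQsort_AQmk {f : Fin Q → α} (hf : Monotone f) : AQsort (AQmk f) = f := by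
  obtain ⟨σ, hσ⟩ := Quotient.exact (AQmk_out (AQmk f)).symm
  rw [hσ] at hf
  exact (Tuple.comp_sort_eq_comp_iff_monotone.mpr hf).symm.trans hσ.symm

theorem AQsort_preimage (C : Set (Fin Q → α)) :
    AQsort ⁻¹' C = AQmk '' (C ∩ {f | Monotone f}) := by
  ext T
  constructor
  · intro hT
    exact ⟨AQsort T, ⟨hT, monotone_AQsort T⟩, AQmk_AQsort T⟩
  · rintro ⟨f, ⟨hf, hmono⟩, rfl⟩
    rwa [Set.mem_preimage, AQsort_AQmk hmono]

theorem isGδ_compl_setOf_monotone [TopologicalSpace α] (hlt : IsGδ {p : α × α | p.1 < p.2}) :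
    IsGδ {f : Fin Q → α | Monotone f}ᶜ := by
  have : {f : Fin Q → α | Monotone f}ᶜ =
      ⋃ l : Fin Q, ⋃ l' : Fin Q, ⋃ _ : l ≤ l', (fun f => (f l', f l)) ⁻¹' {p | p.1 < p.2} := by
    ext f
    simp [Monotone]
  rw [this]
  exact IsGδ.iUnion fun l => IsGδ.iUnion fun l' => IsGδ.iUnion fun _ =>
    hlt.preimage (by fun_prop)

theorem measurable_AQsort_apply [NormedAddCommGroup α] [MeasurableSpace α] [BorelSpace α]
    (hlt : IsGδ {p : α × α | p.1 < p.2}) (l : Fin Q) :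
    Measurable[AQBorel α Q] fun T => AQsort T l := by
  refine @measurable_of_isClosed _ _ _ _ _ (AQBorel α Q) _ fun C hC => ?_
  change MeasurableSet[AQBorel α Q] (AQsort ⁻¹' {f | f l ∈ C})
  rw [AQsort_preimage]
  refine measurableSet_AQmk_image_of_isGδ_compl ?_
  rw [Set.compl_inter]
  exact (hC.preimage (continuous_apply l)).isOpen_compl.isGδ.union (isGδ_compl_setOf_monotone hlt)

end Sorting

def eucLexOrder (n : ℕ) : LinearOrder (Euc n) :=
  LinearOrder.lift' (fun x => toLex (WithLp.ofLp x))
    fun _ _ h => WithLp.ofLp_injective _ (toLex.injective h)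

theorem isGδ_setOf_eucLexOrder_lt (n : ℕ) :
    IsGδ {p : Euc n × Euc n | (eucLexOrder n).lt p.1 p.2} := by
  have : {p : Euc n × Euc n | (eucLexOrder n).lt p.1 p.2} =
      ⋃ i : Fin n, {p : Euc n × Euc n | ∀ j < i, p.1 j = p.2 j} ∩ {p | p.1 i < p.2 i} := by
    ext p
    simp only [Set.mem_iUnion, Set.mem_inter_iff, Set.mem_ofPred_eq]
    rfl
  rw [this]
  refine IsGδ.iUnion fun i => (IsClosed.isGδ ?_).inter (isOpen_lt (by fun_prop) (by fun_prop)).isGδ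
  simp only [Set.ofPred_forall]
  exact isClosed_iInter fun j => isClosed_iInter fun _ => isClosed_eq (by fun_prop) (by fun_prop)

theorem measurable_selection_general (m d n Q : ℕ)
    (B : Set (Euc d))
    (u : Euc d → AQ (Euc n) Q)
    (hu : @Measurable ↥B (AQ (Euc n) Q) Subtype.instMeasurableSpace (AQBorel (Euc n) Q)
      (fun p => u p.1)) :
    ∃ ul : Fin Q → Euc d → Euc n,
      (∀ l : Fin Q, Measurable (fun p : ↥B => ul l p.1)) ∧
      ∀ᵐ p ∂((μH[(m : ℝ)] : Measure (Euc d)).restrict B),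
        u p = AQmk (fun l => ul l p) := by
  let _ := eucLexOrder n
  exact ⟨fun l p => AQsort (u p) l,
    fun l => (measurable_AQsort_apply (isGδ_setOf_eucLexOrder_lt n) l).comp hu,
    ae_of_all _ fun p => (AQmk_AQsort (u p)).symm⟩

/-- **Measurable selection.** Let `Σ` be an `m`-dimensional `C¹` submanifold of
`ℝ^d`, `B ⊆ Σ` an `ℋ^m`-measurable set, and `u : B → 𝒜_Q(ℝⁿ)` measurable (w.r.t. the Borel
σ-algebra of `(𝒜_Q(ℝⁿ), 𝒢)`).  Then there are measurable `u_1, …, u_Q : B → ℝⁿ` with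
`u(p) = ∑_l ⟦u_l(p)⟧` for `ℋ^m`-a.e. `p ∈ B`. -/
theorem measurable_selection (m d n Q : ℕ) (hQ : 0 < Q)
    (S : Set (Euc d)) (hS : IsC1Submanifold m S)
    (B : Set (Euc d)) (hBS : B ⊆ S) (hB : MeasurableSet B)
    (u : Euc d → AQ (Euc n) Q)
    (hu : @Measurable ↥B (AQ (Euc n) Q) Subtype.instMeasurableSpace (AQBorel (Euc n) Q)
      (fun p => u p.1)) :
    ∃ ul : Fin Q → Euc d → Euc n,
      (∀ l : Fin Q, Measurable (fun p : ↥B => ul l p.1)) ∧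
      ∀ᵐ p ∂((μH[(m : ℝ)] : Measure (Euc d)).restrict B),
        u p = AQmk (fun l => ul l p) :=
  measurable_selection_general m d n Q B u hu
end
end

section
/- Let Ω ⊂ ℝᵐ be open and convex, let τ > 0, and let M be a Q-multisection of the trivial bundle Ω × ℝⁿ which is coherent and satisfies the τ-cone condition. Then the associated Q-valued function u_M : Ω → 𝒜_Q(ℝⁿ) is Lipschitz continuous with Lip(u_M) ≤ √Q · τ. -/
open scoped BigOperators
open Metric MeasureTheory Asymptotics
open scoped Classical

noncomputable section

/-- A `Q`-multisection of the trivial bundle `ℝ^d × ℝⁿ → ℝ^d` over a subset `S ⊆ ℝ^d`: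
on each fiber over `S` the multiplicities add up to `Q`. -/
def IsMultisectionOn {d n : ℕ} (M : Euc d → Euc n → ℕ) (S : Set (Euc d)) (Q : ℕ) : Prop :=
  ∀ x ∈ S, {v : Euc n | 0 < M x v}.Finite ∧ (∑ᶠ v ∈ {v : Euc n | 0 < M x v}, M x v) = Q

/-- Coherence of a multisection of the trivial bundle over `S`: for every `x ∈ S` and every
disjoint family of open sets, each containing exactly one point of `M_x`, there is a
neighborhood `U` of `x` on which the multiplicity inside each member of the family is
conserved. -/
def CoherentOn {d n : ℕ} (M : Euc d → Euc n → ℕ) (S : Set (Euc d)) : Prop :=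
  ∀ p ∈ S, ∀ 𝒱 : Finset (Set (Euc n)),
    (∀ V ∈ 𝒱, IsOpen V) →
    ((𝒱 : Set (Set (Euc n))).Pairwise Disjoint) →
    (∀ V ∈ 𝒱, ∃! v : Euc n, 0 < M p v ∧ v ∈ V) →
    ∃ U : Set (Euc d), IsOpen U ∧ p ∈ U ∧
      ∀ q ∈ S ∩ U, ∀ V ∈ 𝒱, ∀ v : Euc n, 0 < M p v → v ∈ V →
        (∑ᶠ w ∈ (V ∩ {w : Euc n | 0 < M q w}), M q w) = M p v

/-- The `τ`-cone condition for a multisection of the trivial bundle over `S`: around every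
point `(x,v)` with `M(x,v) > 0`, the set `{M > 0}` is contained in the `τ`-cone centered at
`(x,v)`. -/
def ConeCondOn {d n : ℕ} (M : Euc d → Euc n → ℕ) (S : Set (Euc d)) (τ : ℝ) : Prop :=
  ∀ x ∈ S, ∀ v : Euc n, 0 < M x v →
    ∃ U : Set (Euc d), IsOpen U ∧ x ∈ U ∧ ∃ V : Set (Euc n), IsOpen V ∧ v ∈ V ∧
      ∀ y ∈ S ∩ U, ∀ w ∈ V, 0 < M y w → ‖w - v‖ ≤ τ * ‖y - x‖

/-!
Near a point `p`, separate the finitely many values of `u p` by disjoint open sets that also lie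
inside their cone neighbourhoods. Coherence says that, for `q` close to `p`, each of these sets
carries exactly the multiplicity of its value in `u p`; since the total mass is `Q`, every value of
`u q` lies in one of them, so there is a permutation matching each value of `u q` to a value of
`u p` at distance at most `τ |q - p|`. Such matchings compose, and a real induction along the
segment from `x` to `y` produces one moving every value by at most `τ |x - y|`; summing the `Q`
squared errors gives `𝒢(u x, u y) ≤ √Q τ |x - y|`.
-/

open Filter Topology

section Matching

variable {α : Type*} [NormedAddCommGroup α] {Q : ℕ}

def MatchableWithin (f g : Fin Q → α) (r : ℝ) : Prop :=
  ∃ σ : Equiv.Perm (Fin Q), ∀ l, ‖f l - g (σ l)‖ ≤ r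

namespace MatchableWithin

variable {f g h : Fin Q → α} {r s : ℝ}

theorem refl (f : Fin Q → α) : MatchableWithin f f 0 :=
  ⟨1, fun l => by simp⟩

theorem mono (hfg : MatchableWithin f g r) (hrs : r ≤ s) : MatchableWithin f g s :=
  let ⟨σ, hσ⟩ := hfg
  ⟨σ, fun l => (hσ l).trans hrs⟩

theorem symm (hfg : MatchableWithin f g r) : MatchableWithin g f r :=
  let ⟨σ, hσ⟩ := hfg
  ⟨σ.symm, fun l => by simpa [norm_sub_rev] using hσ (σ.symm l)⟩

theorem trans (hfg : MatchableWithin f g r) (hgh : MatchableWithin g h s) :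
    MatchableWithin f h (r + s) :=
  let ⟨σ, hσ⟩ := hfg
  let ⟨ρ, hρ⟩ := hgh
  ⟨σ.trans ρ, fun l =>
    (norm_sub_le_norm_sub_add_norm_sub _ _ _).trans (add_le_add (hσ l) (hρ (σ l)))⟩

theorem Gfun_le (hfg : MatchableWithin f g r) : Gfun f g ≤ Real.sqrt Q * r := by
  obtain ⟨σ, hσ⟩ := hfg
  have hnonneg : 0 ≤ Real.sqrt Q * r := by
    rcases Nat.eq_zero_or_pos Q with rfl | hQ
    · simp
    · exact mul_nonneg (Real.sqrt_nonneg _) ((norm_nonneg _).trans (hσ ⟨0, hQ⟩))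
  have hsum : ∑ l, ‖f l - g (σ l)‖ ^ 2 ≤ (Real.sqrt Q * r) ^ 2 := by
    calc ∑ l, ‖f l - g (σ l)‖ ^ 2 ≤ ∑ _l : Fin Q, r ^ 2 :=
          Finset.sum_le_sum fun l _ => pow_le_pow_left₀ (norm_nonneg _) (hσ l) 2
      _ = (Real.sqrt Q * r) ^ 2 := by simp [mul_pow]
  calc Gfun f g ≤ Real.sqrt (∑ l, ‖f l - g (σ l)‖ ^ 2) :=
        ciInf_le ⟨0, Set.forall_mem_range.2 fun _ => Real.sqrt_nonneg _⟩ σ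
    _ ≤ Real.sqrt Q * r := Real.sqrt_le_iff.2 ⟨hnonneg, hsum⟩

end MatchableWithin

end Matching

theorem Real.induction_on_Icc {P : ℝ → Prop} {a b : ℝ} (hab : a ≤ b) (ha : P a)
    (hleft : ∀ t ∈ Set.Ioc a b, ∀ᶠ s in 𝓝[≤] t, P s → P t)
    (hright : ∀ t ∈ Set.Ico a b, P t → ∀ᶠ s in 𝓝[>] t, P s) : P b := by
  set A := {t ∈ Set.Icc a b | P t}
  have hA : A.Nonempty := ⟨a, ⟨le_rfl, hab⟩, ha⟩
  have hT := isLUB_csSup hA ⟨b, fun t ht => ht.1.2⟩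
  set T := sSup A
  have haT : a ≤ T := hT.1 ⟨⟨le_rfl, hab⟩, ha⟩
  have hTb : T ≤ b := hT.2 fun t ht => ht.1.2
  have hPT : P T := by
    rcases haT.eq_or_lt with haT | haT
    · exact haT ▸ ha
    · obtain ⟨s, hs, hPsT⟩ := ((hT.frequently_mem hA).and_eventually (hleft T ⟨haT, hTb⟩)).exists
      exact hPsT hs.2
  rcases hTb.eq_or_lt with hTb | hTb
  · exact hTb ▸ hPT
  · obtain ⟨s, hPs, hTs, hsb⟩ := ((hright T ⟨haT, hTb⟩ hPT).and (Ioo_mem_nhdsGT hTb)).exists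
    exact absurd (hT.1 ⟨⟨haT.trans hTs.le, hsb.le⟩, hPs⟩) (not_le.2 hTs)

theorem Convex.matchableWithin_of_eventually {α E : Type*} [NormedAddCommGroup α]
    [NormedAddCommGroup E] [NormedSpace ℝ E] {Q : ℕ} {S : Set E} (hS : Convex ℝ S)
    {Φ : E → Fin Q → α} {τ : ℝ}
    (hloc : ∀ p ∈ S, ∀ᶠ q in 𝓝[S] p, MatchableWithin (Φ q) (Φ p) (τ * dist q p))
    {x y : E} (hx : x ∈ S) (hy : y ∈ S) : MatchableWithin (Φ y) (Φ x) (τ * dist y x) := by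
  set γ : ℝ → E := fun t => AffineMap.lineMap x y t
  have hlocγ : ∀ t ∈ Set.Icc (0 : ℝ) 1, ∀ᶠ s in 𝓝 t, s ∈ Set.Icc (0 : ℝ) 1 →
      MatchableWithin (Φ (γ s)) (Φ (γ t)) (τ * (|s - t| * dist x y)) := by
    intro t ht
    have hcont : Continuous γ := AffineMap.lineMap_continuous
    filter_upwards [hcont.continuousAt.eventually
      (eventually_nhdsWithin_iff.1 (hloc (γ t) (hS.lineMap_mem hx hy ht)))] with s hs hs01
    simpa only [γ, dist_lineMap_lineMap, Real.dist_eq] using hs (hS.lineMap_mem hx hy hs01)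
  have hP1 := Real.induction_on_Icc
    (P := fun t => MatchableWithin (Φ (γ t)) (Φ x) (τ * (t * dist x y))) zero_le_one
    (by simpa [γ] using MatchableWithin.refl (Φ x))
    (fun t ht => by
      filter_upwards [nhdsWithin_le_nhds (hlocγ t (Set.Ioc_subset_Icc_self ht)),
        Icc_mem_nhdsLE ht.1] with s hs hs0t hPs
      refine (hs ⟨hs0t.1, hs0t.2.trans ht.2⟩).symm.trans hPs |>.mono (le_of_eq ?_)
      rw [abs_of_nonpos (by linarith [hs0t.2])]
      ring)
    (fun t ht hPt => by
      filter_upwards [nhdsWithin_le_nhds (hlocγ t (Set.Ico_subset_Icc_self ht)),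
        Ioo_mem_nhdsGT ht.2] with s hs hst1
      refine (hs ⟨ht.1.trans hst1.1.le, hst1.2.le⟩).trans hPt |>.mono (le_of_eq ?_)
      rw [abs_of_nonneg (by linarith [hst1.1])]
      ring)
  simpa [γ, dist_comm] using hP1

section Counting

open Finset

theorem Theta_eq_card {α : Type*} [DecidableEq α] {Q : ℕ} (T : AQ α Q) (v : α) :
    Theta T v = #{l | T.out l = v} := by
  rw [Theta, Set.ncard_eq_toFinset_card']
  congr 1
  ext l
  simp

theorem Theta_pos_iff {α : Type*} {Q : ℕ} (T : AQ α Q) (v : α) :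
    0 < Theta T v ↔ v ∈ Set.range T.out := by
  simp [Theta_eq_card, Finset.card_pos, Finset.Nonempty]

theorem finsum_mem_Theta {α : Type*} [DecidableEq α] {Q : ℕ} (T : AQ α Q) (s : Set α) :
    ∑ᶠ w ∈ s, Theta T w = #{l | T.out l ∈ s} := by
  rw [finsum_mem_eq_sum_of_inter_support_eq (t := image T.out {l | T.out l ∈ s}),
    card_eq_sum_card_image T.out]
  · refine sum_congr rfl fun w hw => ?_
    obtain ⟨l, hl, rfl⟩ := mem_image.1 hw
    rw [Theta_eq_card, filter_filter]
    congr 1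
    ext l'
    simp only [mem_filter, mem_univ, true_and]
    exact ⟨fun h => ⟨h ▸ (mem_filter.1 hl).2, h⟩, And.right⟩
  · ext w
    simp only [Set.mem_inter_iff, Function.mem_support, ne_eq, coe_image, coe_filter,
      mem_univ, true_and, Set.mem_image, ← Nat.pos_iff_ne_zero,
      Theta_pos_iff, Set.mem_range]
    constructor
    · rintro ⟨hw, l, rfl⟩
      exact ⟨⟨l, hw, rfl⟩, l, rfl⟩
    · rintro ⟨⟨l, hl, rfl⟩, -⟩
      exact ⟨hl, l, rfl⟩

theorem exists_perm_forall_mem_of_card_eq {ι α : Type*} [Fintype ι] [DecidableEq α] (f g : ι → α)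
    {W : α → Set α} (hW : (Set.range g).PairwiseDisjoint W)
    (hcard : ∀ v ∈ Set.range g, #{l | f l ∈ W v} = #{l | g l = v}) :
    ∃ σ : Equiv.Perm ι, ∀ l, f l ∈ W (g (σ l)) := by
  -- The sets `{l | f l ∈ W v}` are disjoint and have the sizes of the fibers of `g`.
  have hcover : (image g univ).biUnion (fun v => {l | f l ∈ W v}) = univ := by
    refine eq_univ_of_card _ ?_
    rw [card_biUnion, ← card_univ, card_eq_sum_card_image g univ]
    · exact sum_congr rfl fun v hv => hcard v (by simpa using hv)
    · intro v hv v' hv' hne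
      simp only [coe_image, coe_univ, Set.image_univ] at hv hv'
      exact disjoint_filter.2 fun l _ hl hl' => hne (hW.elim_set hv hv' _ hl hl')
  have hψ : ∀ l, ∃ v ∈ Set.range g, f l ∈ W v := fun l => by
    obtain ⟨v, hv, hl⟩ := mem_biUnion.1 (hcover ▸ mem_univ l)
    exact ⟨v, by simpa using hv, (mem_filter.1 hl).2⟩
  choose ψ hψg hψW using hψ
  have hfiber : ∀ v, Fintype.card {l // ψ l = v} = Fintype.card {l // g l = v} := by
    intro v
    simp only [Fintype.card_subtype]
    by_cases hv : v ∈ Set.range g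
    · rw [← hcard v hv]
      congr 1
      ext l
      simp only [mem_filter, mem_univ, true_and]
      exact ⟨fun h => h ▸ hψW l, fun h => hW.elim_set (hψg l) hv _ (hψW l) h⟩
    · rw [filter_false_of_mem fun l _ h => hv (by rw [← h]; exact hψg l),
        filter_false_of_mem fun l _ h => hv ⟨l, h⟩]
  exact ⟨Equiv.ofFiberEquiv fun v => Fintype.equivOfCardEq (hfiber v),
    fun l => by rw [Equiv.ofFiberEquiv_map (g := g)]; exact hψW l⟩

end Counting

section Multisection

variable {m n Q : ℕ} {S : Set (Euc m)} {M : Euc m → Euc n → ℕ} {u : Euc m → AQ (Euc n) Q}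

theorem pos_iff_mem_range_out (hu : ∀ x ∈ S, ∀ v, Theta (u x) v = M x v) (x : Euc m) (hx : x ∈ S)
    (v : Euc n) : 0 < M x v ↔ v ∈ Set.range (u x).out := by
  rw [← hu x hx v, Theta_pos_iff]

open Finset in
theorem CoherentOn.eventually_card_mem_eq (hcoh : CoherentOn M S)
    (hu : ∀ x ∈ S, ∀ v, Theta (u x) v = M x v) {p : Euc m} (hp : p ∈ S)
    {W : Euc n → Set (Euc n)} (hWo : ∀ v ∈ Set.range (u p).out, IsOpen (W v))
    (hvW : ∀ v ∈ Set.range (u p).out, v ∈ W v) (hW : (Set.range (u p).out).PairwiseDisjoint W) :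
    ∀ᶠ q in 𝓝[S] p, ∀ v ∈ Set.range (u p).out,
      #{l | (u q).out l ∈ W v} = #{l | (u p).out l = v} := by
  have hpos := pos_iff_mem_range_out hu
  obtain ⟨U, hUo, hpU, hU⟩ := hcoh p hp ((univ.image (u p).out).image W)
    (by simpa using hWo)
    (by
      simp only [coe_image, coe_univ, Set.image_univ]
      rintro _ ⟨v, hv, rfl⟩ _ ⟨v', hv', rfl⟩ hne
      exact hW hv hv' fun h => hne (congrArg W h))
    (by
      simp only [mem_image, mem_univ, true_and]
      rintro _ ⟨v, ⟨l, rfl⟩, rfl⟩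
      refine ⟨(u p).out l, ⟨(hpos p hp _).2 ⟨l, rfl⟩, hvW _ ⟨l, rfl⟩⟩, ?_⟩
      rintro w ⟨hw, hwW⟩
      exact hW.elim_set ((hpos p hp w).1 hw) ⟨l, rfl⟩ w (hvW w ((hpos p hp w).1 hw)) hwW)
  filter_upwards [self_mem_nhdsWithin, mem_nhdsWithin_of_mem_nhds (hUo.mem_nhds hpU)]
    with q hqS hqU v hv
  have hmass := hU q ⟨hqS, hqU⟩ (W v) (mem_image_of_mem W (by simpa using hv)) v
    ((hpos p hp v).2 hv) (hvW v hv)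
  have hsupp : {w | 0 < M q w} = Function.support (Theta (u q)) := by
    ext w
    simp [← hu q hqS w, Nat.pos_iff_ne_zero]
  rwa [hsupp, finsum_mem_congr rfl fun w _ => (hu q hqS w).symm, finsum_mem_inter_support,
    finsum_mem_Theta, ← hu p hp, Theta_eq_card] at hmass

theorem CoherentOn.eventually_matchableWithin {τ : ℝ} (hcoh : CoherentOn M S)
    (hcone : ConeCondOn M S τ) (hu : ∀ x ∈ S, ∀ v, Theta (u x) v = M x v) {p : Euc m}
    (hp : p ∈ S) :
    ∀ᶠ q in 𝓝[S] p, MatchableWithin (u q).out (u p).out (τ * dist q p) := by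
  have hpos := pos_iff_mem_range_out hu
  choose! U hUo hpU V hVo hvV hcone using fun v (hv : v ∈ Set.range (u p).out) =>
    hcone p hp v ((hpos p hp v).2 hv)
  obtain ⟨B, hB, hBdisj⟩ := (Set.finite_range (u p).out).t2_separation
  have hW : (Set.range (u p).out).PairwiseDisjoint fun v => B v ∩ V v :=
    hBdisj.mono fun v => Set.inter_subset_left
  have hnear : ∀ᶠ q in 𝓝[S] p, ∀ v ∈ Set.range (u p).out, q ∈ U v :=
    (Filter.eventually_all_finite (Set.finite_range _)).2 fun v hv =>
      mem_nhdsWithin_of_mem_nhds ((hUo v hv).mem_nhds (hpU v hv))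
  filter_upwards [self_mem_nhdsWithin, hnear, hcoh.eventually_card_mem_eq hu hp
    (fun v hv => (hB v).2.inter (hVo v hv)) (fun v hv => ⟨(hB v).1, hvV v hv⟩) hW]
    with q hqS hqU hcard
  obtain ⟨σ, hσ⟩ := exists_perm_forall_mem_of_card_eq (u q).out _ hW hcard
  refine ⟨σ, fun l => ?_⟩
  rw [dist_eq_norm]
  exact hcone _ ⟨σ l, rfl⟩ q ⟨hqS, hqU _ ⟨σ l, rfl⟩⟩ _ (hσ l).2 ((hpos q hqS _).2 ⟨l, rfl⟩)

end Multisection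

theorem coherent_cone_implies_lipschitz_general (m n Q : ℕ)
    (Ω : Set (Euc m)) (hΩc : Convex ℝ Ω) (τ : ℝ)
    (M : Euc m → Euc n → ℕ)
    (hcoh : CoherentOn M Ω) (hcone : ConeCondOn M Ω τ)
    (u : Euc m → AQ (Euc n) Q)
    (hu : ∀ x ∈ Ω, ∀ v : Euc n, Theta (u x) v = M x v) :
    ∀ x ∈ Ω, ∀ y ∈ Ω, Gdist (u x) (u y) ≤ Real.sqrt Q * τ * dist x y := by
  intro x hx y hy
  have hxy := hΩc.matchableWithin_of_eventually
    (fun p hp => hcoh.eventually_matchableWithin hcone hu hp) hy hx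
  rw [mul_assoc]
  exact hxy.Gfun_le

/-- If `Ω ⊆ ℝ^m` is open and convex, `τ > 0`, and `M` is a coherent
`Q`-multisection of the trivial bundle `Ω × ℝⁿ` satisfying the `τ`-cone condition, then the
associated `Q`-valued function `u_M` is Lipschitz with `Lip(u_M) ≤ √Q · τ`. -/
theorem coherent_cone_implies_lipschitz (m n Q : ℕ) (hQ : 0 < Q)
    (Ω : Set (Euc m)) (hΩo : IsOpen Ω) (hΩc : Convex ℝ Ω) (τ : ℝ) (hτ : 0 < τ)
    (M : Euc m → Euc n → ℕ) (hM : IsMultisectionOn M Ω Q)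
    (hcoh : CoherentOn M Ω) (hcone : ConeCondOn M Ω τ)
    (u : Euc m → AQ (Euc n) Q)
    (hu : ∀ x ∈ Ω, ∀ v : Euc n, Theta (u x) v = M x v) :
    ∀ x ∈ Ω, ∀ y ∈ Ω, Gdist (u x) (u y) ≤ Real.sqrt Q * τ * dist x y :=
  coherent_cone_implies_lipschitz_general m n Q Ω hΩc τ M hcoh hcone u hu
end
end

section
/- The graph of f stays close to Σ along normal directions: There exist a geometric constant C = C(m,n) and, for every 0 < s < r < 1, the following holds. Let c₀ > 0 satisfy c₀ ≤ (r−s)/2 and C c₀² ≤ 1 − (s/r)², let φ : B_s ⊂ ℝᵐ → ℝⁿ be C³ and f : B_r → 𝒜_Q(ℝⁿ) be Lipschitz, satisfying ‖φ‖_{C²} + Lip(f) ≤ c₀ and ‖φ‖_{C⁰} + ‖f‖_{C⁰} ≤ c₀ s. Suppose x ∈ B_s, v ∈ ℝ^{m+n} is orthogonal to T_{Φ(x)}Σ, and Φ(x) + v = (y, u) with y ∈ B_r and u ∈ spt(f(y)). Then |v| ≤ c₀ r. -/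
open scoped BigOperators
open Metric MeasureTheory Asymptotics
open scoped Classical

noncomputable section

/-- `ℝ^{m+n} = ℝ^m × ℝ^n` with the Euclidean (L²) norm. -/
abbrev EucP (m n : ℕ) : Type := WithLp 2 (Euc m × Euc n)

/-- The point of `ℝ^{m+n}` with horizontal part `x` and vertical part `y`. -/
def mkP {m n : ℕ} (x : Euc m) (y : Euc n) : EucP m n :=
  (WithLp.equiv 2 (Euc m × Euc n)).symm (x, y)

/-- Orthogonal projection `p_{π₀}` of `ℝ^{m+n}` onto `ℝ^m × {0} ≃ ℝ^m`. -/
def projH {m n : ℕ} (ξ : EucP m n) : Euc m := (WithLp.equiv 2 (Euc m × Euc n) ξ).1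

/-- Orthogonal projection `p_{π₀^⊥}` of `ℝ^{m+n}` onto `{0} × ℝ^n ≃ ℝ^n`. -/
def projV {m n : ℕ} (ξ : EucP m n) : Euc n := (WithLp.equiv 2 (Euc m × Euc n) ξ).2

/-- The linear map `τ ↦ (τ, A τ)`, whose range is the tangent plane of a graph. -/
def graphMap {m n : ℕ} (A : Euc m →L[ℝ] Euc n) : Euc m →ₗ[ℝ] EucP m n :=
  (WithLp.linearEquiv 2 ℝ (Euc m × Euc n)).symm.toLinearMap.comp
    ((LinearMap.id : Euc m →ₗ[ℝ] Euc m).prod (A : Euc m →ₗ[ℝ] Euc n))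

/-- The graph parametrization `Φ(x) := (x, φ(x))`. -/
def Phi {m n : ℕ} (φ : Euc m → Euc n) (x : Euc m) : EucP m n := mkP x (φ x)

/-- The tangent space `T_{Φ(x)} Gr(φ) = {(τ, Dφ(x)·τ) : τ ∈ ℝ^m}` of the graph of `φ`. -/
def tangentSpace {m n : ℕ} (φ : Euc m → Euc n) (x : Euc m) : Submodule ℝ (EucP m n) :=
  LinearMap.range (graphMap (fderiv ℝ φ x))

/-- `v ∈ κ_{Φ(x)}`: `v` is orthogonal to the tangent space of the graph of `φ` at `Φ(x)`. -/
def IsNormalAt {m n : ℕ} (φ : Euc m → Euc n) (x : Euc m) (v : EucP m n) : Prop :=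
  v ∈ (tangentSpace φ x)ᗮ

/-- The multiplicity function `M(ξ) := Θ_{f(p_{π₀}(ξ))}(p_{π₀^⊥}(ξ))` of the multisection
associated to the `Q`-valued function `f`. -/
def Mmap {m n Q : ℕ} (f : Euc m → AQ (Euc n) Q) (ξ : EucP m n) : ℕ :=
  Theta (f (projH ξ)) (projV ξ)

/-- Hypothesis (H): `φ` is `C³` on `B_s`, `f` is `L`-Lipschitz on `B_r` (w.r.t. `𝒢`), and
`‖φ‖_{C²} + Lip(f) ≤ c₀`, `‖φ‖_{C⁰} + ‖f‖_{C⁰} ≤ c₀ s`. -/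
def HypH {m n Q : ℕ} (s r c₀ L : ℝ) (φ : Euc m → Euc n) (f : Euc m → AQ (Euc n) Q) : Prop :=
  0 ≤ L ∧ ContDiffOn ℝ 3 φ (ball (0 : Euc m) s) ∧
  (∀ x ∈ ball (0 : Euc m) r, ∀ y ∈ ball (0 : Euc m) r, Gdist (f x) (f y) ≤ L * dist x y) ∧
  (∀ x ∈ ball (0 : Euc m) s,
    ‖φ x‖ + ‖fderiv ℝ φ x‖ + ‖fderiv ℝ (fderiv ℝ φ) x‖ + L ≤ c₀) ∧
  (∀ x ∈ ball (0 : Euc m) s, ∀ y ∈ ball (0 : Euc m) r,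
    ‖φ x‖ + Gdist (f y) (AQmk (fun _ => (0 : Euc n))) ≤ c₀ * s)

/-- `T = N(Φ(x))`: `T` is the `Q`-point of `ℝ^{m+n}` whose multiplicity at each `v` equals
`M(Φ(x)+v)` when `v` is a normal vector to the graph of `φ` at `Φ(x)` with `|v| < c₀`, and
vanishes otherwise.  This characterizes the reparametrizing normal vector field `N`. -/
def IsNField {m n Q : ℕ} (c₀ : ℝ) (φ : Euc m → Euc n) (f : Euc m → AQ (Euc n) Q)
    (x : Euc m) (T : AQ (EucP m n) Q) : Prop :=
  ∀ v : EucP m n, Theta T v =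
    if IsNormalAt φ x v ∧ ‖v‖ < c₀ then Mmap f (Phi φ x + v) else 0

/-- The set `M_p` (for `p = Φ(x)`) of the points `p + v`, `v ∈ κ_p`, `|v| < c₀`, of the fiber
of the tubular neighborhood over `p` carrying positive multiplicity. -/
def MsetAt {m n Q : ℕ} (c₀ : ℝ) (φ : Euc m → Euc n) (f : Euc m → AQ (Euc n) Q)
    (x : Euc m) : Set (EucP m n) :=
  {ξ | ∃ v : EucP m n, IsNormalAt φ x v ∧ ‖v‖ < c₀ ∧ ξ = Phi φ x + v ∧ 0 < Mmap f ξ}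

/-! The normal vector `v = (v₁, v₂)` at `Φ(x)` satisfies `⟨τ, v₁⟩ + ⟨Dφ(x)τ, v₂⟩ = 0` for all
`τ`, so its horizontal part is controlled by its vertical part: `|v₁| ≤ ‖Dφ(x)‖ |v₂| ≤ c₀ |v₂|`.
The vertical part is `v₂ = w - φ(x)`, of size at most `|w| + |φ(x)| ≤ c₀ s`, as `|w|` is bounded
by `𝒢(f(y), Q⟦0⟧)`. Hence `|v|² ≤ (1 + c₀²) c₀² s²`, and `(1 + c₀²) s² ≤ r²` follows from
`c₀² ≤ 1 - (s/r)²`; the constant `C = 1` works. -/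

lemma AQmk_const_out {α : Type*} {Q : ℕ} (a : α) :
    (AQmk (fun _ => a) : AQ α Q).out = fun _ => a := by
  obtain ⟨σ, hσ⟩ := Quotient.mk_out (s := QPerm α Q) (fun _ => a)
  exact hσ

lemma norm_le_Gdist_zero {α : Type*} [NormedAddCommGroup α] {Q : ℕ} {T : AQ α Q} {w : α}
    (hw : w ∈ AQspt T) : ‖w‖ ≤ Gdist T (AQmk (fun _ => (0 : α))) := by
  obtain ⟨l, rfl⟩ := hw
  simp only [Gdist, Gfun, AQmk_const_out, sub_zero, ciInf_const]
  calc ‖T.out l‖ = Real.sqrt (‖T.out l‖ ^ 2) := (Real.sqrt_sq (norm_nonneg _)).symm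
    _ ≤ Real.sqrt (∑ j, ‖T.out j‖ ^ 2) :=
      Real.sqrt_le_sqrt (Finset.single_le_sum (fun j _ => sq_nonneg ‖T.out j‖)
        (Finset.mem_univ l))

lemma norm_le_opNorm_mul_of_inner_add_inner_eq_zero {E F : Type*}
    [NormedAddCommGroup E] [InnerProductSpace ℝ E] [NormedAddCommGroup F] [InnerProductSpace ℝ F]
    {A : E →L[ℝ] F} {a : E} {b : F} (h : ∀ τ, inner ℝ τ a + inner ℝ (A τ) b = 0) :
    ‖a‖ ≤ ‖A‖ * ‖b‖ := by
  have hsq : ‖a‖ * ‖a‖ ≤ ‖A‖ * ‖b‖ * ‖a‖ :=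
    calc ‖a‖ * ‖a‖ = -inner ℝ (A a) b := by
          rw [← real_inner_self_eq_norm_mul_norm]; linarith [h a]
      _ ≤ ‖A a‖ * ‖b‖ := (neg_le_abs _).trans (abs_real_inner_le_norm _ _)
      _ ≤ ‖A‖ * ‖a‖ * ‖b‖ := by gcongr; exact A.le_opNorm a
      _ = ‖A‖ * ‖b‖ * ‖a‖ := by ring
  rcases (norm_nonneg a).eq_or_lt with ha | ha
  · rw [← ha]; positivity
  · exact le_of_mul_le_mul_right hsq ha

lemma IsNormalAt.norm_fst_le {m n : ℕ} {φ : Euc m → Euc n} {x : Euc m} {v : EucP m n}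
    (hv : IsNormalAt φ x v) : ‖v.fst‖ ≤ ‖fderiv ℝ φ x‖ * ‖v.snd‖ := by
  refine norm_le_opNorm_mul_of_inner_add_inner_eq_zero fun τ => ?_
  have h := (Submodule.mem_orthogonal _ v).mp hv (graphMap (fderiv ℝ φ x) τ) ⟨τ, rfl⟩
  rwa [WithLp.prod_inner_apply] at h

lemma snd_eq_of_Phi_add_eq_mkP {m n : ℕ} {φ : Euc m → Euc n} {x y : Euc m} {w : Euc n}
    {v : EucP m n} (h : Phi φ x + v = mkP y w) : v.snd = w - φ x := by
  have h2 : φ x + v.snd = w := by simpa [Phi, mkP] using congrArg WithLp.snd h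
  exact eq_sub_of_add_eq' h2

section HypH

variable {m n Q : ℕ} {s r c₀ L : ℝ} {φ : Euc m → Euc n} {f : Euc m → AQ (Euc n) Q} {x : Euc m}

lemma HypH.norm_fderiv_le (hH : HypH s r c₀ L φ f) (hx : x ∈ ball 0 s) :
    ‖fderiv ℝ φ x‖ ≤ c₀ := by
  have := hH.2.2.2.1 x hx
  linarith [hH.1, norm_nonneg (φ x), norm_nonneg (fderiv ℝ (fderiv ℝ φ) x)]

lemma HypH.norm_sub_le_of_mem_spt {y : Euc m} {w : Euc n} (hH : HypH s r c₀ L φ f)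
    (hx : x ∈ ball 0 s) (hy : y ∈ ball 0 r) (hw : w ∈ AQspt (f y)) : ‖w - φ x‖ ≤ c₀ * s := by
  have := hH.2.2.2.2 x hx y hy
  linarith [norm_sub_le w (φ x), norm_le_Gdist_zero hw]

end HypH

lemma WithLp.prod_norm_sq_le_of_norm_fst_le {E F : Type*} [SeminormedAddCommGroup E]
    [SeminormedAddCommGroup F] {v : WithLp 2 (E × F)} {c : ℝ}
    (h : ‖v.fst‖ ≤ c * ‖v.snd‖) : ‖v‖ ^ 2 ≤ (1 + c ^ 2) * ‖v.snd‖ ^ 2 := by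
  rw [WithLp.prod_norm_sq_eq_of_L2]
  have := pow_le_pow_left₀ (norm_nonneg _) h 2
  rw [mul_pow] at this
  linarith

lemma one_add_sq_mul_sq_le_sq {s r c : ℝ} (hs : 0 ≤ s) (hsr : s < r)
    (hc : c ^ 2 ≤ 1 - (s / r) ^ 2) : (1 + c ^ 2) * s ^ 2 ≤ r ^ 2 := by
  have hr : 0 < r := hs.trans_lt hsr
  have hcr : c ^ 2 * r ^ 2 ≤ r ^ 2 - s ^ 2 := by
    rw [div_pow] at hc
    have := mul_le_mul_of_nonneg_right hc (sq_nonneg r)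
    rwa [sub_mul, div_mul_cancel₀ _ (by positivity), one_mul] at this
  nlinarith [mul_le_mul_of_nonneg_left (pow_le_pow_left₀ hs hsr.le 2) (sq_nonneg c)]

theorem graph_close_to_manifold_along_normals_general
    (m n Q : ℕ) :
    ∃ C : ℝ, 0 < C ∧
      ∀ s r : ℝ, 0 < s → s < r → r < 1 →
      ∀ c₀ : ℝ, 0 < c₀ → c₀ ≤ (r - s) / 2 → C * c₀ ^ 2 ≤ 1 - (s / r) ^ 2 →
      ∀ (φ : Euc m → Euc n) (f : Euc m → AQ (Euc n) Q) (L : ℝ),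
        HypH s r c₀ L φ f →
        ∀ x ∈ ball (0 : Euc m) s, ∀ v : EucP m n, IsNormalAt φ x v →
          ∀ (y : Euc m) (w : Euc n),
            Phi φ x + v = mkP y w → y ∈ ball (0 : Euc m) r → w ∈ AQspt (f y) →
            ‖v‖ ≤ c₀ * r := by
  refine ⟨1, one_pos, ?_⟩
  intro s r hs hsr _ c₀ hc₀ _ hC φ f L hH x hx v hv y w hvw hy hw
  rw [one_mul] at hC
  have hsnd : ‖v.snd‖ ≤ c₀ * s := by
    rw [snd_eq_of_Phi_add_eq_mkP hvw]
    exact hH.norm_sub_le_of_mem_spt hx hy hw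
  have hfst : ‖v.fst‖ ≤ c₀ * ‖v.snd‖ :=
    hv.norm_fst_le.trans (by gcongr; exact hH.norm_fderiv_le hx)
  have hsq : ‖v‖ ^ 2 ≤ (c₀ * r) ^ 2 :=
    calc ‖v‖ ^ 2 ≤ (1 + c₀ ^ 2) * ‖v.snd‖ ^ 2 :=
          WithLp.prod_norm_sq_le_of_norm_fst_le hfst
      _ ≤ (1 + c₀ ^ 2) * (c₀ * s) ^ 2 := by gcongr
      _ = c₀ ^ 2 * ((1 + c₀ ^ 2) * s ^ 2) := by ring
      _ ≤ c₀ ^ 2 * r ^ 2 := by gcongr; exact one_add_sq_mul_sq_le_sq hs.le hsr hC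
      _ = (c₀ * r) ^ 2 := by ring
  exact (pow_le_pow_iff_left₀ (norm_nonneg v) (mul_pos hc₀ (hs.trans hsr)).le
    two_ne_zero).mp hsq

/-- **The graph of `f` stays close to `Σ` along normal directions.** There is
a geometric constant `C = C(m,n)` such that for all `0 < s < r < 1` and all `c₀ > 0` with
`c₀ ≤ (r-s)/2` and `C c₀² ≤ 1 - (s/r)²`, under hypothesis (H): if `x ∈ B_s`, `v ⊥ T_{Φ(x)}Σ`
and `Φ(x) + v = (y, u)` with `y ∈ B_r` and `u ∈ spt(f(y))`, then `|v| ≤ c₀ r`. -/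
theorem graph_close_to_manifold_along_normals
    (m n Q : ℕ) (hm : 0 < m) (hn : 0 < n) (hQ : 0 < Q) :
    ∃ C : ℝ, 0 < C ∧
      ∀ s r : ℝ, 0 < s → s < r → r < 1 →
      ∀ c₀ : ℝ, 0 < c₀ → c₀ ≤ (r - s) / 2 → C * c₀ ^ 2 ≤ 1 - (s / r) ^ 2 →
      ∀ (φ : Euc m → Euc n) (f : Euc m → AQ (Euc n) Q) (L : ℝ),
        HypH s r c₀ L φ f →
        ∀ x ∈ ball (0 : Euc m) s, ∀ v : EucP m n, IsNormalAt φ x v →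
          ∀ (y : Euc m) (w : Euc n),
            Phi φ x + v = mkP y w → y ∈ ball (0 : Euc m) r → w ∈ AQspt (f y) →
            ‖v‖ ≤ c₀ * r :=
  graph_close_to_manifold_along_normals_general m n Q
end
end
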